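/- Consider a fully connected network f_θ(x) = W_L σ_L(W_{L−1}(⋯ σ₂(W₁x + b₁) ⋯) + b_{L−1}) with weights W_j ∈ ℝ^{d_j×d_{j−1}}, biases b_j, input dimension d₀ = d_x, output dimension d_L = d_y, activations σ_l : ℝ → ℝ applied entrywise, and empirical loss F(θ) = (1/n) Σ_{i=1}^n ℓ(y_i, f_θ(x_i)) on a dataset (x₁,y₁), …, (xₙ,yₙ). Assume: (1) there exists a coordinate index k such that the k-th entries (x_i)_k, i = 1, …, n, are pairwise distinct; (2) the last hidden layer satisfies d_{L−1} ≥ n; (3) every activation σ_l is continuous; (4) the loss ℓ(y, z) is convex in its second argument z; (5) F attains a global minimum. Then F has no sub-optimal basin: every compact setwise strict local minimum of F contains a global minimum of F. -/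

import Mathlib

noncomputable section

/-- Hidden-layer outputs of a fully connected network: `z_0(x) = x` and
`z_{l+1}(x) = σ_{l+1}(W_l z_l(x) + b_l)` (entrywise activation `σ`, indexed by layer). -/
def mlpHidden (d : ℕ → ℕ) (σ : ℕ → ℝ → ℝ)
    (W : (l : ℕ) → Fin (d (l + 1)) → Fin (d l) → ℝ)
    (b : (l : ℕ) → Fin (d (l + 1)) → ℝ) :
    (l : ℕ) → (Fin (d 0) → ℝ) → Fin (d l) → ℝ
  | 0 => fun x => x
  | l + 1 => fun x j => σ (l + 1) (∑ i, W l j i * mlpHidden d σ W b l x i + b l j)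

/-- Extend a family of `M` weight matrices (indexed by `Fin M`) to an `ℕ`-indexed family. -/
def extW (M : ℕ) (d : ℕ → ℕ)
    (W : (l : Fin M) → Fin (d ((l : ℕ) + 1)) → Fin (d (l : ℕ)) → ℝ) :
    (l : ℕ) → Fin (d (l + 1)) → Fin (d l) → ℝ :=
  fun l => if h : l < M then W ⟨l, h⟩ else fun _ _ => 0

/-- Extend a family of `M` bias vectors (indexed by `Fin M`) to an `ℕ`-indexed family. -/
def extb (M : ℕ) (d : ℕ → ℕ)
    (b : (l : Fin M) → Fin (d ((l : ℕ) + 1)) → ℝ) :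
    (l : ℕ) → Fin (d (l + 1)) → ℝ :=
  fun l => if h : l < M then b ⟨l, h⟩ else fun _ => 0

/-- Parameters of a fully connected network with `M + 1` layers (`L = M + 1` in the text):
weight matrices `W_1, …, W_{M+1}` and biases `b_1, …, b_M` (no bias in the output layer). -/
abbrev Params (M : ℕ) (d : ℕ → ℕ) :=
  ((l : Fin (M + 1)) → Fin (d ((l : ℕ) + 1)) → Fin (d (l : ℕ)) → ℝ) ×
    ((l : Fin M) → Fin (d ((l : ℕ) + 1)) → ℝ)

/-- Output of the fully connected network
`f_θ(x) = W_{M+1} σ_{M+1-ish}(W_M (⋯ σ_2(W_1 x + b_1) ⋯) + b_M)` with `M` hidden layers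
and per-layer activations. -/
def net (M : ℕ) (d : ℕ → ℕ) (σ : ℕ → ℝ → ℝ) (θ : Params M d)
    (x : Fin (d 0) → ℝ) : Fin (d (M + 1)) → ℝ :=
  fun j => ∑ i, θ.1 ⟨M, Nat.lt_succ_self M⟩ j i *
    mlpHidden d σ (extW (M + 1) d θ.1) (extb M d θ.2) M x i

lemma mlpHidden_congr (d : ℕ → ℕ) (σ : ℕ → ℝ → ℝ)
    {W W' : (l : ℕ) → Fin (d (l + 1)) → Fin (d l) → ℝ}
    {b b' : (l : ℕ) → Fin (d (l + 1)) → ℝ} (m : ℕ)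
    (hW : ∀ l, l < m → W l = W' l) (hb : ∀ l, l < m → b l = b' l) (x : Fin (d 0) → ℝ) :
    mlpHidden d σ W b m x = mlpHidden d σ W' b' m x := by
  induction m with
  | zero => rfl
  | succ k ih =>
    funext j
    have hk : mlpHidden d σ W b k x = mlpHidden d σ W' b' k x :=
      ih (fun l hl => hW l (hl.trans (Nat.lt_succ_self k)))
         (fun l hl => hb l (hl.trans (Nat.lt_succ_self k)))
    simp only [mlpHidden, hk, hW k (Nat.lt_succ_self k), hb k (Nat.lt_succ_self k)]

lemma mlpHidden_bias_ne (d : ℕ → ℕ) (σ : ℕ → ℝ → ℝ) (m : ℕ)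
    (W : (l : ℕ) → Fin (d (l + 1)) → Fin (d l) → ℝ)
    (b b' : (l : ℕ) → Fin (d (l + 1)) → ℝ)
    (hlow : ∀ l, l < m → b l = b' l) (x : Fin (d 0) → ℝ)
    (k : Fin (d (m + 1))) (hk : b m k = b' m k) :
    mlpHidden d σ W b (m + 1) x k = mlpHidden d σ W b' (m + 1) x k := by
  have hlower : mlpHidden d σ W b m x = mlpHidden d σ W b' m x :=
    mlpHidden_congr d σ m (fun _ _ => rfl) hlow x
  simp only [mlpHidden, hlower, hk]

lemma net_update (M : ℕ) (d : ℕ → ℕ) (σ : ℕ → ℝ → ℝ)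
    (W : (l : Fin (M + 1)) → Fin (d ((l : ℕ) + 1)) → Fin (d (l : ℕ)) → ℝ)
    (bb : (l : Fin M) → Fin (d ((l : ℕ) + 1)) → ℝ)
    (B : Fin (d (M + 1)) → Fin (d M) → ℝ) (x : Fin (d 0) → ℝ) :
    net M d σ (Function.update W ⟨M, Nat.lt_succ_self M⟩ B, bb) x
      = fun j => ∑ k, B j k * mlpHidden d σ (extW (M + 1) d W) (extb M d bb) M x k := by
  have h2 : mlpHidden d σ (extW (M + 1) d (Function.update W ⟨M, Nat.lt_succ_self M⟩ B))
      (extb M d bb) M x = mlpHidden d σ (extW (M + 1) d W) (extb M d bb) M x := by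
    refine mlpHidden_congr d σ M (fun l hl => ?_) (fun _ _ => rfl) x
    have h1 : l < M + 1 := hl.trans (Nat.lt_succ_self M)
    simp only [extW, dif_pos h1]
    exact Function.update_of_ne (Fin.ne_of_val_ne hl.ne) _ _
  funext j
  simp only [net, h2, Function.update_self]

lemma add_smul_updateW (M : ℕ) (d : ℕ → ℕ) (θ : Params M d)
    (D : Fin (d (M + 1)) → Fin (d M) → ℝ) (t : ℝ) :
    θ + t • ((Function.update
        (0 : (l : Fin (M + 1)) → Fin (d ((l : ℕ) + 1)) → Fin (d (l : ℕ)) → ℝ)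
        ⟨M, Nat.lt_succ_self M⟩ D,
      (0 : (l : Fin M) → Fin (d ((l : ℕ) + 1)) → ℝ)) : Params M d)
      = (Function.update θ.1 ⟨M, Nat.lt_succ_self M⟩
          (θ.1 ⟨M, Nat.lt_succ_self M⟩ + t • D), θ.2) := by
  have h1 : (θ + t • ((Function.update
        (0 : (l : Fin (M + 1)) → Fin (d ((l : ℕ) + 1)) → Fin (d (l : ℕ)) → ℝ)
        ⟨M, Nat.lt_succ_self M⟩ D,
      (0 : (l : Fin M) → Fin (d ((l : ℕ) + 1)) → ℝ)) : Params M d)).1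
      = θ.1 + t • Function.update
        (0 : (l : Fin (M + 1)) → Fin (d ((l : ℕ) + 1)) → Fin (d (l : ℕ)) → ℝ)
        ⟨M, Nat.lt_succ_self M⟩ D := rfl
  refine Prod.ext ?_ ?_
  · rw [h1]
    funext l
    simp only [Pi.add_apply, Pi.smul_apply]
    rcases eq_or_ne l ⟨M, Nat.lt_succ_self M⟩ with rfl | hl
    · rw [Function.update_self, Function.update_self]
    · rw [Function.update_of_ne hl, Function.update_of_ne hl, Pi.zero_apply, smul_zero,
        add_zero]
  · show θ.2 + t • (0 : (l : Fin M) → Fin (d ((l : ℕ) + 1)) → ℝ) = θ.2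
    rw [smul_zero, add_zero]

lemma add_smul_updateB (M : ℕ) (d : ℕ → ℕ) (θ : Params M d)
    (Db : (l : Fin M) → Fin (d ((l : ℕ) + 1)) → ℝ) (t : ℝ) :
    θ + t • (((0 : (l : Fin (M + 1)) → Fin (d ((l : ℕ) + 1)) → Fin (d (l : ℕ)) → ℝ),
        Db) : Params M d)
      = (θ.1, θ.2 + t • Db) := by
  refine Prod.ext ?_ ?_
  · show θ.1 + t • (0 : (l : Fin (M + 1)) → Fin (d ((l : ℕ) + 1)) → Fin (d (l : ℕ)) → ℝ) = θ.1
    rw [smul_zero, add_zero]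
  · rfl

lemma mlpHidden_continuousP (M : ℕ) (d : ℕ → ℕ) (σ : ℕ → ℝ → ℝ)
    (hcont : ∀ l, Continuous (σ l)) (m : ℕ) (xx : Fin (d 0) → ℝ) :
    Continuous fun θ : Params M d =>
      mlpHidden d σ (extW (M + 1) d θ.1) (extb M d θ.2) m xx := by
  induction m with
  | zero => exact continuous_const
  | succ k ih =>
    apply continuous_pi
    intro j
    simp only [mlpHidden]
    apply (hcont (k + 1)).comp
    apply Continuous.add
    · apply continuous_finset_sum
      intro i _
      apply Continuous.mul
      · by_cases hk : k < M + 1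
        · simp only [extW, dif_pos hk]
          exact (continuous_apply i).comp ((continuous_apply j).comp
            ((continuous_apply _).comp continuous_fst))
        · simp only [extW, dif_neg hk]
          exact continuous_const
      · exact (continuous_apply i).comp ih
    · by_cases hk : k < M
      · simp only [extb, dif_pos hk]
        exact (continuous_apply j).comp ((continuous_apply _).comp continuous_snd)
      · simp only [extb, dif_neg hk]
        exact continuous_const


set_option maxHeartbeats 1000000 in
set_option synthInstance.maxHeartbeats 400000 in
/-- A fully connected network with `L = M + 1` layers, continuous per-layer activations,
last hidden layer of width `d M = d_{L−1} ≥ n`, samples whose `k`-th input coordinates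
are pairwise distinct for some `k`, a loss `ℓ(y, z)` convex in `z`, and whose empirical
loss attains a global minimum, has no sub-optimal basin: every nonempty compact setwise
strict local minimum of the empirical loss contains a global minimum. -/
theorem stmt6 (M n : ℕ) (d : ℕ → ℕ) (σ : ℕ → ℝ → ℝ)
    (hcont : ∀ l, Continuous (σ l))
    (hwide : n ≤ d M)
    (x : Fin n → Fin (d 0) → ℝ) (y : Fin n → Fin (d (M + 1)) → ℝ)
    (hdata : ∃ k : Fin (d 0), Function.Injective fun i => x i k)
    (ℓ : (Fin (d (M + 1)) → ℝ) → (Fin (d (M + 1)) → ℝ) → ℝ)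
    (hconv : ∀ yv : Fin (d (M + 1)) → ℝ, ConvexOn ℝ Set.univ (ℓ yv))
    (F : Params M d → ℝ)
    (hF : F = fun θ => (1 / (n : ℝ)) * ∑ i, ℓ (y i) (net M d σ θ (x i)))
    (hattain : ∃ θg : Params M d, ∀ θ, F θg ≤ F θ)
    (X : Set (Params M d)) (hXcompact : IsCompact X) (hXne : X.Nonempty)
    (hstrict : ∃ ε > (0 : ℝ), ∀ θ ∈ X, ∀ θ' ∉ X, ‖θ - θ'‖ ≤ ε → F θ < F θ') :
    ∃ θs ∈ X, ∀ θ, F θs ≤ F θ := by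
  classical
  obtain ⟨θg, hθg⟩ := hattain
  -- continuity of F
  have hℓcont : ∀ i, Continuous (ℓ (y i)) := by
    intro i
    have h := (hconv (y i)).continuousOn isOpen_univ
    rw [← continuousOn_univ]
    exact h
  have hnetcont : ∀ i, Continuous fun θ : Params M d => net M d σ θ (x i) := by
    intro i
    apply continuous_pi
    intro j
    simp only [net]
    apply continuous_finset_sum
    intro k _
    apply Continuous.mul
    · exact (continuous_apply k).comp ((continuous_apply j).comp
        ((continuous_apply _).comp continuous_fst))
    · exact (continuous_apply k).comp (mlpHidden_continuousP M d σ hcont M (x i))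
  have hFcont : Continuous F := by
    rw [hF]
    apply Continuous.mul continuous_const
    apply continuous_finset_sum
    intro i _
    exact (hℓcont i).comp (hnetcont i)
  obtain ⟨θs, hsX, hmin⟩ := hXcompact.exists_isMinOn hXne hFcont.continuousOn
  have hminle : ∀ q ∈ X, F θs ≤ F q := fun q hq => hmin hq
  by_cases hok : F θs ≤ F θg
  · exact ⟨θs, hsX, fun θ => hok.trans (hθg θ)⟩
  exfalso
  push_neg at hok
  obtain ⟨ε, hε, hstr⟩ := hstrict
  -- the jump rule
  have jump : ∀ p ∈ X, ∀ p', ‖p - p'‖ ≤ ε → F p' ≤ F θs → p' ∈ X := by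
    intro p hp p' hd hF'
    by_contra hnot
    have h1 := hstr p hp p' hnot hd
    have h2 := hminle p hp
    linarith
  -- segments with controlled values stay in X
  have seg : ∀ p v : Params M d, p ∈ X →
      (∀ t : ℝ, 0 ≤ t → t ≤ 1 → F (p + t • v) ≤ F θs) → p + v ∈ X := by
    intro p v hp hv
    set N : ℕ := max 1 ⌈‖v‖ / ε⌉₊ with hNdef
    have hN1 : 1 ≤ N := le_max_left _ _
    have hNpos : (0 : ℝ) < N := by
      have : (1 : ℝ) ≤ N := by exact_mod_cast hN1
      linarith
    have hNε : ‖v‖ ≤ N * ε := by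
      have h1 : ‖v‖ / ε ≤ (⌈‖v‖ / ε⌉₊ : ℝ) := Nat.le_ceil _
      have h2 : ((⌈‖v‖ / ε⌉₊ : ℕ) : ℝ) ≤ (N : ℝ) := by
        exact_mod_cast le_max_right 1 ⌈‖v‖ / ε⌉₊
      have h3 : ‖v‖ / ε ≤ (N : ℝ) := h1.trans h2
      calc ‖v‖ = (‖v‖ / ε) * ε := by rw [div_mul_cancel₀ _ (ne_of_gt hε)]
      _ ≤ (N : ℝ) * ε := mul_le_mul_of_nonneg_right h3 hε.le
    have key : ∀ m : ℕ, m ≤ N → p + ((m : ℝ) / N) • v ∈ X := by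
      intro m
      induction m with
      | zero =>
        intro _
        simpa using hp
      | succ k ihk =>
        intro hk
        have hkN : k ≤ N := Nat.le_of_succ_le hk
        have hq := ihk hkN
        have hk1 : ((k + 1 : ℕ) : ℝ) ≤ (N : ℝ) := by exact_mod_cast hk
        have hdiff : (p + ((k : ℝ) / N) • v) - (p + (((k + 1 : ℕ) : ℝ) / N) • v)
            = (((k : ℝ) / N) - (((k + 1 : ℕ) : ℝ) / N)) • v := by
          rw [add_sub_add_left_eq_sub, ← sub_smul]
        apply jump _ hq
        · rw [hdiff, norm_smul, Real.norm_eq_abs]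
          have habs : |((k : ℝ) / N) - (((k + 1 : ℕ) : ℝ) / N)| = 1 / N := by
            push_cast
            rw [div_sub_div_same]
            rw [show (k : ℝ) - ((k : ℝ) + 1) = -1 by ring]
            rw [abs_div, abs_neg, abs_one, abs_of_pos hNpos]
          rw [habs]
          rw [div_mul_eq_mul_div, one_mul, div_le_iff₀ hNpos, mul_comm]
          exact hNε
        · apply hv
          · positivity
          · rw [div_le_one hNpos]
            exact hk1
    have hfin := key N le_rfl
    rw [div_self (ne_of_gt hNpos), one_smul] at hfin
    exact hfin
  -- rays with controlled values give a contradiction with compactness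
  obtain ⟨R, hRX⟩ : ∃ R, ∀ q ∈ X, ‖q‖ ≤ R := by
    obtain ⟨R, hR⟩ := hXcompact.isBounded.subset_closedBall (0 : Params M d)
    refine ⟨R, fun q hq => ?_⟩
    have := hR hq
    simpa [Metric.mem_closedBall, dist_zero_right] using this
  have ray : ∀ p v : Params M d, p ∈ X → v ≠ 0 →
      (∀ t : ℝ, 0 ≤ t → F (p + t • v) ≤ F θs) → False := by
    intro p v hp hv0 hval
    have hvn : 0 < ‖v‖ := norm_pos_iff.mpr hv0
    have key : ∀ m : ℕ, p + ((m : ℝ) * (ε / ‖v‖)) • v ∈ X := by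
      intro m
      induction m with
      | zero => simpa using hp
      | succ k ihk =>
        apply jump _ ihk
        · have hdiff : (p + ((k : ℝ) * (ε / ‖v‖)) • v)
              - (p + (((k + 1 : ℕ) : ℝ) * (ε / ‖v‖)) • v)
              = (((k : ℝ) * (ε / ‖v‖)) - (((k + 1 : ℕ) : ℝ) * (ε / ‖v‖))) • v := by
            rw [add_sub_add_left_eq_sub, ← sub_smul]
          rw [hdiff, norm_smul, Real.norm_eq_abs]
          have habs : |((k : ℝ) * (ε / ‖v‖)) - (((k + 1 : ℕ) : ℝ) * (ε / ‖v‖))| = ε / ‖v‖ := by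
            push_cast
            rw [show (k : ℝ) * (ε / ‖v‖) - ((k : ℝ) + 1) * (ε / ‖v‖) = -(ε / ‖v‖) by ring]
            rw [abs_neg, abs_of_pos (by positivity)]
          rw [habs, div_mul_cancel₀ _ (ne_of_gt hvn)]
        · apply hval
          positivity
    obtain ⟨m, hm⟩ := exists_nat_gt ((R + ‖p‖) / ε)
    have h1 := hRX _ (key m)
    have h2 : ‖((m : ℝ) * (ε / ‖v‖)) • v‖ ≤ ‖p + ((m : ℝ) * (ε / ‖v‖)) • v‖ + ‖p‖ := by
      have h3 := norm_sub_le (p + ((m : ℝ) * (ε / ‖v‖)) • v) p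
      rwa [add_sub_cancel_left] at h3
    have h4 : ‖((m : ℝ) * (ε / ‖v‖)) • v‖ = (m : ℝ) * ε := by
      rw [norm_smul, Real.norm_eq_abs, abs_of_nonneg (by positivity), mul_assoc,
        div_mul_cancel₀ _ (ne_of_gt hvn)]
    have h5 : (m : ℝ) * ε ≤ R + ‖p‖ := by
      rw [← h4]
      exact h2.trans (by linarith)
    have h6 : (R + ‖p‖) / ε < (m : ℝ) := hm
    rw [div_lt_iff₀ hε] at h6
    linarith
  -- features of the last hidden layer at θs
  obtain ⟨Z, hZ⟩ : ∃ Z : Fin n → Fin (d M) → ℝ,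
      ∀ i, mlpHidden d σ (extW (M + 1) d θs.1) (extb M d θs.2) M (x i) = Z i :=
    ⟨_, fun _ => rfl⟩
  have hnet_s : ∀ i, net M d σ θs (x i)
      = fun j => ∑ k, θs.1 ⟨M, Nat.lt_succ_self M⟩ j k * Z i k := by
    intro i
    funext j
    simp only [net, hZ i]
  -- Main reduction: an output matrix realizing the global minimizer's outputs gives False
  have SEGA : ∀ A' : Fin (d (M + 1)) → Fin (d M) → ℝ,
      (∀ i, (fun j => ∑ k, A' j k * Z i k) = net M d σ θg (x i)) → False := by
    intro A' hA'
    set D : Fin (d (M + 1)) → Fin (d M) → ℝ :=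
      fun j k => A' j k - θs.1 ⟨M, Nat.lt_succ_self M⟩ j k with hD
    set v : Params M d := (Function.update
        (0 : (l : Fin (M + 1)) → Fin (d ((l : ℕ) + 1)) → Fin (d (l : ℕ)) → ℝ)
        ⟨M, Nat.lt_succ_self M⟩ D,
      (0 : (l : Fin M) → Fin (d ((l : ℕ) + 1)) → ℝ)) with hv
    have hni : ∀ (t : ℝ) i, net M d σ (θs + t • v) (x i)
        = (1 - t) • net M d σ θs (x i) + t • net M d σ θg (x i) := by
      intro t i
      rw [hv, add_smul_updateW, net_update]
      funext j
      simp only [hZ i]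
      have h1 : net M d σ θs (x i) j
          = ∑ k, θs.1 ⟨M, Nat.lt_succ_self M⟩ j k * Z i k := by rw [hnet_s i]
      have h2 : net M d σ θg (x i) j = ∑ k, A' j k * Z i k := (congrFun (hA' i) j).symm
      simp only [Pi.add_apply, Pi.smul_apply, smul_eq_mul, h1, h2, hD]
      rw [Finset.mul_sum, Finset.mul_sum, ← Finset.sum_add_distrib]
      apply Finset.sum_congr rfl
      intro k _
      ring
    have hFt : ∀ t : ℝ, 0 ≤ t → t ≤ 1 → F (θs + t • v) ≤ F θs := by
      intro t ht0 ht1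
      have step1 : F (θs + t • v) = (1 / (n : ℝ)) * ∑ i,
          ℓ (y i) ((1 - t) • net M d σ θs (x i) + t • net M d σ θg (x i)) := by
        rw [hF]
        simp only
        congr 1
        apply Finset.sum_congr rfl
        intro i _
        rw [hni t i]
      have step2 : ∀ i, ℓ (y i) ((1 - t) • net M d σ θs (x i) + t • net M d σ θg (x i))
          ≤ (1 - t) * ℓ (y i) (net M d σ θs (x i)) + t * ℓ (y i) (net M d σ θg (x i)) := by
        intro i
        have := (hconv (y i)).2 (Set.mem_univ (net M d σ θs (x i)))
          (Set.mem_univ (net M d σ θg (x i))) (by linarith : (0:ℝ) ≤ 1 - t) ht0 (by ring)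
        simpa [smul_eq_mul] using this
      have step3 : (1 / (n : ℝ)) * ∑ i,
          ℓ (y i) ((1 - t) • net M d σ θs (x i) + t • net M d σ θg (x i))
          ≤ (1 / (n : ℝ)) * ∑ i, ((1 - t) * ℓ (y i) (net M d σ θs (x i))
            + t * ℓ (y i) (net M d σ θg (x i))) := by
        apply mul_le_mul_of_nonneg_left _ (by positivity)
        exact Finset.sum_le_sum fun i _ => step2 i
      have step4 : (1 / (n : ℝ)) * ∑ i, ((1 - t) * ℓ (y i) (net M d σ θs (x i))
            + t * ℓ (y i) (net M d σ θg (x i)))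
          = (1 - t) * F θs + t * F θg := by
        rw [hF]
        simp only
        rw [Finset.sum_add_distrib, ← Finset.mul_sum, ← Finset.mul_sum]
        ring
      have step5 : (1 - t) * F θs + t * F θg ≤ F θs := by
        nlinarith [mul_nonneg ht0 (sub_nonneg.mpr hok.le)]
      rw [step1]
      exact (step3.trans (le_of_eq step4)).trans step5
    have hend := seg θs v hsX hFt
    have hone : θs + v = θs + (1 : ℝ) • v := by rw [one_smul]
    have hFe : F (θs + v) = F θg := by
      rw [hone, hF]
      simp only
      have harg : ∀ i, net M d σ (θs + (1 : ℝ) • v) (x i) = net M d σ θg (x i) := by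
        intro i
        rw [hni 1 i]
        simp
      calc (1 / (n : ℝ)) * ∑ i, ℓ (y i) (net M d σ (θs + (1:ℝ) • v) (x i))
          = (1 / (n : ℝ)) * ∑ i, ℓ (y i) (net M d σ θg (x i)) := by
            congr 1
            exact Finset.sum_congr rfl fun i _ => by rw [harg i]
      _ = (1 / (n : ℝ)) * ∑ i, ℓ (y i) (net M d σ θg (x i)) := rfl
    have hge := hminle _ hend
    rw [hFe] at hge
    linarith
  -- dichotomy on the feature rows
  by_cases hLI : LinearIndependent ℝ (fun k : Fin (d M) => (fun i : Fin n => Z i k))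
  · -- independent rows: they span ℝ^n, realize the global minimizer's outputs
    have hcard : Fintype.card (Fin (d M)) ≤ Module.finrank ℝ (Fin n → ℝ) :=
      hLI.fintype_card_le_finrank
    rw [Fintype.card_fin, Module.finrank_fin_fun] at hcard
    have hdn : d M = n := le_antisymm hcard hwide
    have hspan : Submodule.span ℝ
        (Set.range (fun k : Fin (d M) => (fun i : Fin n => Z i k))) = ⊤ := by
      apply hLI.span_eq_top_of_card_eq_finrank'
      rw [Fintype.card_fin, Module.finrank_fin_fun, hdn]
    have hrep : ∀ j, ∃ a : Fin (d M) → ℝ,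
        ∑ k, a k • (fun i : Fin n => Z i k) = (fun i => net M d σ θg (x i) j) := by
      intro j
      have hmem : (fun i => net M d σ θg (x i) j) ∈ Submodule.span ℝ
          (Set.range (fun k : Fin (d M) => (fun i : Fin n => Z i k))) := by
        rw [hspan]; exact Submodule.mem_top
      exact (Submodule.mem_span_range_iff_exists_fun ℝ).mp hmem
    choose Ac hAc using hrep
    apply SEGA (fun j k => Ac j k)
    intro i
    funext j
    have := congrFun (hAc j) i
    simpa [Finset.sum_apply, smul_eq_mul] using this
  · -- dependent rows: a column can be zeroed out with unchanged outputs, then escape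
    obtain ⟨g, hg, j0, hgj0⟩ := Fintype.not_linearIndependent_iff.mp hLI
    have hgZ : ∀ i, ∑ k, g k * Z i k = 0 := by
      intro i
      have h0 := congrFun hg i
      simpa [Finset.sum_apply, smul_eq_mul] using h0
    by_cases hM0 : M = 0
    · -- M = 0: the network is linear, realize θg's outputs directly
      subst hM0
      apply SEGA (θg.1 ⟨0, Nat.lt_succ_self 0⟩)
      intro i
      funext j
      have hZx : Z i = x i := by rw [← hZ i]; rfl
      simp only [net, hZx, mlpHidden]
    · obtain ⟨m, rfl⟩ := Nat.exists_eq_succ_of_ne_zero hM0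
      -- compensation: zero out column j0 while keeping outputs constant
      set DA : Fin (d (m + 1 + 1)) → Fin (d (m + 1)) → ℝ :=
        fun j k => if k = j0
          then -(θs.1 ⟨m + 1, Nat.lt_succ_self (m + 1)⟩ j j0)
          else -(g k / g j0) * θs.1 ⟨m + 1, Nat.lt_succ_self (m + 1)⟩ j j0 with hDA
      have hDA0 : ∀ i j, ∑ k, DA j k * Z i k = 0 := by
        intro i j
        have hterm : ∀ k, DA j k * Z i k
            = (-(θs.1 ⟨m + 1, Nat.lt_succ_self (m + 1)⟩ j j0) / g j0) * (g k * Z i k) := by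
          intro k
          rcases eq_or_ne k j0 with rfl | hk
          · simp only [hDA, if_pos rfl]
            field_simp
          · simp only [hDA, if_neg hk]
            ring
        rw [Finset.sum_congr rfl (fun k _ => hterm k), ← Finset.mul_sum, hgZ i, mul_zero]
      set vA : Params (m + 1) d := (Function.update
          (0 : (l : Fin (m + 1 + 1)) → Fin (d ((l : ℕ) + 1)) → Fin (d (l : ℕ)) → ℝ)
          ⟨m + 1, Nat.lt_succ_self (m + 1)⟩ DA,
        (0 : (l : Fin (m + 1)) → Fin (d ((l : ℕ) + 1)) → ℝ)) with hvA
      have hnetA : ∀ (t : ℝ) i, net (m + 1) d σ (θs + t • vA) (x i)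
          = net (m + 1) d σ θs (x i) := by
        intro t i
        rw [hvA, add_smul_updateW, net_update, hnet_s i]
        funext j
        simp only [hZ i]
        have expand : ∑ k, ((θs.1 ⟨m + 1, Nat.lt_succ_self (m + 1)⟩ + t • DA) j k) * Z i k
            = (∑ k, θs.1 ⟨m + 1, Nat.lt_succ_self (m + 1)⟩ j k * Z i k)
              + t * ∑ k, DA j k * Z i k := by
          rw [Finset.mul_sum, ← Finset.sum_add_distrib]
          apply Finset.sum_congr rfl
          intro k _
          simp only [Pi.add_apply, Pi.smul_apply, smul_eq_mul]
          ring
        rw [expand, hDA0 i j, mul_zero, add_zero]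
      have hFA : ∀ t : ℝ, F (θs + t • vA) = F θs := by
        intro t
        rw [hF]
        simp only
        congr 1
        apply Finset.sum_congr rfl
        intro i _
        rw [hnetA t i]
      -- the compensated point
      set p1 : Params (m + 1) d := (Function.update θs.1 ⟨m + 1, Nat.lt_succ_self (m + 1)⟩
          (θs.1 ⟨m + 1, Nat.lt_succ_self (m + 1)⟩ + (1 : ℝ) • DA), θs.2) with hp1
      have hp1eq : θs + (1 : ℝ) • vA = p1 := by
        rw [hvA, add_smul_updateW, hp1]
      have hp1X : p1 ∈ X := by
        have h := seg θs vA hsX (fun t _ _ => le_of_eq (hFA t))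
        have h2 : θs + vA = p1 := by rw [← hp1eq, one_smul]
        exact h2 ▸ h
      have hp1F : F p1 = F θs := by
        rw [← hp1eq]
        exact hFA 1
      -- column j0 of the output matrix of p1 vanishes
      have hB10 : ∀ j, (θs.1 ⟨m + 1, Nat.lt_succ_self (m + 1)⟩ + (1 : ℝ) • DA) j j0 = 0 := by
        intro j
        simp only [Pi.add_apply, Pi.smul_apply, smul_eq_mul, hDA, eq_self_iff_true, if_true]
        ring
      -- escape direction: bias of unit j0 in the last hidden layer
      set Db : (l : Fin (m + 1)) → Fin (d ((l : ℕ) + 1)) → ℝ :=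
        Function.update (0 : (l : Fin (m + 1)) → Fin (d ((l : ℕ) + 1)) → ℝ)
          ⟨m, Nat.lt_succ_self m⟩ (Pi.single j0 (1 : ℝ)) with hDb
      set vB : Params (m + 1) d := ((0 : (l : Fin (m + 1 + 1)) →
          Fin (d ((l : ℕ) + 1)) → Fin (d (l : ℕ)) → ℝ), Db) with hvB
      have hvB0 : vB ≠ 0 := by
        intro h
        have h2 := congrFun (congrFun (congrArg Prod.snd h) ⟨m, Nat.lt_succ_self m⟩) j0
        simp only [hvB, hDb, Function.update_self, Pi.single_eq_same] at h2
        exact one_ne_zero h2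
      have hnetB : ∀ (t : ℝ) i, net (m + 1) d σ (p1 + t • vB) (x i)
          = net (m + 1) d σ p1 (x i) := by
        intro t i
        rw [hvB, add_smul_updateB, hp1]
        rw [net_update, net_update]
        funext j
        apply Finset.sum_congr rfl
        intro k _
        rcases eq_or_ne k j0 with rfl | hk
        · rw [hB10 j, zero_mul, zero_mul]
        · congr 1
          apply mlpHidden_bias_ne
          · -- lower biases agree
            intro l hl
            have hl1 : l < m + 1 := hl.trans (Nat.lt_succ_self m)
            simp only [extb, dif_pos hl1]
            funext k'
            simp only [Prod.snd, Pi.add_apply, Pi.smul_apply, smul_eq_mul]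
            rw [hDb, Function.update_of_ne (Fin.ne_of_val_ne hl.ne)]
            simp
          · -- bias of unit k at top hidden layer agrees
            simp only [extb, dif_pos (Nat.lt_succ_self m)]
            simp only [Pi.add_apply, Pi.smul_apply, smul_eq_mul]
            rw [hDb, Function.update_self, Pi.single_eq_of_ne hk, mul_zero, add_zero]
      have hFB : ∀ t : ℝ, 0 ≤ t → F (p1 + t • vB) ≤ F θs := by
        intro t _
        have : F (p1 + t • vB) = F p1 := by
          rw [hF]
          simp only
          congr 1
          apply Finset.sum_congr rfl
          intro i _
          rw [hnetB t i]
        rw [this, hp1F]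
      exact ray p1 vB hp1X hvB0 hFB
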